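/- arXiv:1608.02092 — 6 statements merged into one kernel-verified Lean document; each statement's English description precedes it below -/
import Mathlib

section
/- In the abstract LOD setting, let F : V → ℝ be a continuous linear functional, let u ∈ V satisfy a(u, v) = F(v) for all v ∈ V, and let ū_H ∈ V_H satisfy a((1 − 𝒞)ū_H, (1 − 𝒞)v_H) = F((1 − 𝒞)v_H) for all v_H ∈ V_H. Then ū_H = I_H u, i.e., the LOD Galerkin solution coincides with the quasi-interpolation of the exact solution. -/
/-!
Because `𝒞` maps into `W = ker I_H` and `I_H` is a projection, `u - (1 - 𝒞) I_H u ∈ W`, so the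
orthogonality of the corrector gives `a(u, (1 - 𝒞)v) = a((1 - 𝒞) I_H u, (1 - 𝒞)v)`: the
quasi-interpolant `I_H u` solves the LOD Galerkin problem too. Coercivity then forces
`(1 - 𝒞)(ū_H - I_H u) = 0`, and `1 - 𝒞` is injective on `V_H`, since `I_H` fixes `V_H` and
annihilates the range of `𝒞`.
-/

namespace LOD

variable {V : Type*} [AddCommGroup V] [Module ℝ V]

lemma sub_sub_corrector_mem_ker {P C : V →ₗ[ℝ] V} (hP : ∀ v, P (P v) = P v)
    (hC : ∀ v, C v ∈ LinearMap.ker P) (u : V) :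
    u - (P u - C (P u)) ∈ LinearMap.ker P := by
  have hCP : P (C (P u)) = 0 := hC (P u)
  simp [hP, hCP]

lemma apply_sub_corrector_eq {a : V →ₗ[ℝ] V →ₗ[ℝ] ℝ} {P C : V →ₗ[ℝ] V}
    (hP : ∀ v, P (P v) = P v) (hC : ∀ v, C v ∈ LinearMap.ker P)
    (horth : ∀ w ∈ LinearMap.ker P, ∀ v, a w (v - C v) = 0) (u v : V) :
    a u (v - C v) = a (P u - C (P u)) (v - C v) := by
  have h := horth _ (sub_sub_corrector_mem_ker hP hC u) v
  rwa [map_sub a, LinearMap.sub_apply, sub_eq_zero] at h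

lemma eq_zero_of_sub_corrector_eq_zero {P C : V →ₗ[ℝ] V} (hC : ∀ v, C v ∈ LinearMap.ker P)
    {e : V} (he : P e = e) (h : e - C e = 0) : e = 0 := by
  rw [sub_eq_zero] at h
  calc e = P e := he.symm
    _ = P (C e) := by rw [← h]
    _ = 0 := hC e

end LOD

lemma eq_zero_of_coercive {V : Type*} [NormedAddCommGroup V] [Module ℝ V]
    {a : V →ₗ[ℝ] V →ₗ[ℝ] ℝ} {α : ℝ} (hα : 0 < α) (hcoer : ∀ v, α * ‖v‖ ^ 2 ≤ a v v) {v : V}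
    (hv : a v v = 0) : v = 0 := by
  have hsq : α * ‖v‖ ^ 2 ≤ 0 := hv ▸ hcoer v
  have hnorm : ‖v‖ ^ 2 = 0 :=
    le_antisymm (nonpos_of_mul_nonpos_right hsq hα) (sq_nonneg _)
  simpa using hnorm

theorem lod_galerkin_eq_quasi_interpolation_general
    {V : Type*} [NormedAddCommGroup V] [InnerProductSpace ℝ V]
    (a : V →ₗ[ℝ] V →ₗ[ℝ] ℝ) (α : ℝ) (hα : 0 < α)
    (ha_coer : ∀ v : V, α * ‖v‖ ^ 2 ≤ a v v)
    (VH : Submodule ℝ V)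
    (IH : V →L[ℝ] V)
    (hIH_range : LinearMap.range (IH : V →ₗ[ℝ] V) = VH)
    (hIH_proj : ∀ v : V, IH (IH v) = IH v)
    (Cor : V →ₗ[ℝ] V)
    (hCor_W : ∀ v : V, Cor v ∈ LinearMap.ker (IH : V →ₗ[ℝ] V))
    (hCor_orth : ∀ w ∈ LinearMap.ker (IH : V →ₗ[ℝ] V), ∀ v : V, a w (v - Cor v) = 0)
    (F : V →L[ℝ] ℝ) (u : V) (hu : ∀ v : V, a u v = F v)
    (uH : V) (huH : uH ∈ VH)
    (hsol : ∀ vH ∈ VH, a (uH - Cor uH) (vH - Cor vH) = F (vH - Cor vH)) :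
    uH = IH u := by
  have hidem : IsIdempotentElem (IH : V →ₗ[ℝ] V) := LinearMap.ext hIH_proj
  have he : uH - IH u ∈ VH := VH.sub_mem huH (hIH_range ▸ LinearMap.mem_range_self _ u)
  have hdiff : (uH - IH u) - Cor (uH - IH u) = (uH - Cor uH) - (IH u - Cor (IH u)) := by
    rw [map_sub]; abel
  have hgalerkin : ∀ vH ∈ VH, a ((uH - IH u) - Cor (uH - IH u)) (vH - Cor vH) = 0 := by
    intro vH hvH
    have hIHu := LOD.apply_sub_corrector_eq hIH_proj hCor_W hCor_orth u vH
    rw [hu] at hIHu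
    rw [hdiff, map_sub a, LinearMap.sub_apply, hsol vH hvH]
    exact sub_eq_zero.mpr hIHu
  have hcorr := eq_zero_of_coercive hα ha_coer (hgalerkin _ he)
  have hfix : IH (uH - IH u) = uH - IH u :=
    LinearMap.IsIdempotentElem.mem_range_iff hidem |>.mp (hIH_range ▸ he)
  exact sub_eq_zero.mp (LOD.eq_zero_of_sub_corrector_eq_zero hCor_W hfix hcorr)

/-- In the abstract LOD setting, if `u` solves the exact variational
problem and `ū_H ∈ V_H` solves the LOD Galerkin problem
`a((1-𝒞)ū_H, (1-𝒞)v_H) = F((1-𝒞)v_H)` for all `v_H ∈ V_H`, then `ū_H = I_H u`. -/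
theorem lod_galerkin_eq_quasi_interpolation
    {V : Type*} [NormedAddCommGroup V] [InnerProductSpace ℝ V] [CompleteSpace V]
    (a : V →ₗ[ℝ] V →ₗ[ℝ] ℝ) (α β : ℝ) (hα : 0 < α) (hβ : 0 < β)
    (ha_symm : ∀ u v : V, a u v = a v u)
    (ha_bdd : ∀ u v : V, |a u v| ≤ β * ‖u‖ * ‖v‖)
    (ha_coer : ∀ v : V, α * ‖v‖ ^ 2 ≤ a v v)
    (VH : Submodule ℝ V) (hVHfin : FiniteDimensional ℝ VH)
    (IH : V →L[ℝ] V)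
    (hIH_range : LinearMap.range (IH : V →ₗ[ℝ] V) = VH)
    (hIH_proj : ∀ v : V, IH (IH v) = IH v)
    (Cor : V →ₗ[ℝ] V)
    (hCor_W : ∀ v : V, Cor v ∈ LinearMap.ker (IH : V →ₗ[ℝ] V))
    (hCor_orth : ∀ w ∈ LinearMap.ker (IH : V →ₗ[ℝ] V), ∀ v : V, a w (v - Cor v) = 0)
    (F : V →L[ℝ] ℝ) (u : V) (hu : ∀ v : V, a u v = F v)
    (uH : V) (huH : uH ∈ VH)
    (hsol : ∀ vH ∈ VH, a (uH - Cor uH) (vH - Cor vH) = F (vH - Cor vH)) :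
    uH = IH u :=
  lod_galerkin_eq_quasi_interpolation_general a α hα ha_coer VH IH hIH_range hIH_proj Cor hCor_W
    hCor_orth F u hu uH huH hsol
end

section
/- In the abstract LOD setting with the approximation property of I_H, let f ∈ L and let u ∈ V satisfy a(u, v) = ⟨f, ι v⟩_L for all v ∈ V. Then the error of the ideal LOD approximation satisfies the energy estimate ‖u − (1 − 𝒞)I_H u‖_V ≤ (C_I H / α) ‖f‖_L. -/
open scoped RealInnerProductSpace

/-! The LOD error `e = u − (1 − 𝒞) I_H u` lies in `W = ker I_H`, because `I_H` is a projection
and `𝒞` maps into `W`. As the range of `1 − 𝒞` is `a`-orthogonal to `W`, Galerkin orthogonality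
gives `a(e, e) = a(u, e) = ⟨f, ι e⟩_L`, and on `W` the approximation property reads
`‖ι e‖_L ≤ C_I H ‖e‖_V`. Coercivity then yields `α ‖e‖² ≤ C_I H ‖f‖ ‖e‖`. -/

theorem le_div_of_mul_sq_le_mul {x α M : ℝ} (hα : 0 < α) (hM : 0 ≤ M)
    (h : α * x ^ 2 ≤ M * x) : x ≤ M / α := by
  rw [le_div_iff₀ hα]
  rcases le_or_gt x 0 with hx | hx
  · nlinarith
  · nlinarith

theorem norm_le_div_of_coercive {V : Type*} [NormedAddCommGroup V] [Module ℝ V]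
    (a : V →ₗ[ℝ] V →ₗ[ℝ] ℝ) {α M : ℝ} (hα : 0 < α) (hM : 0 ≤ M)
    (ha_coer : ∀ v : V, α * ‖v‖ ^ 2 ≤ a v v) {e : V} (he : a e e ≤ M * ‖e‖) :
    ‖e‖ ≤ M / α :=
  le_div_of_mul_sq_le_mul hα hM ((ha_coer e).trans he)

section LOD

variable {R M : Type*} [CommRing R] [AddCommGroup M] [Module R M]

/-- The ideal LOD approximation `(1 − 𝒞) I_H v`. -/
def lodApprox (P Cor : M →ₗ[R] M) (v : M) : M :=
  P v - Cor (P v)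

theorem sub_lodApprox_mem_ker {P Cor : M →ₗ[R] M} (hP : ∀ v, P (P v) = P v)
    (hCor : ∀ v, Cor v ∈ LinearMap.ker P) (v : M) :
    v - lodApprox P Cor v ∈ LinearMap.ker P := by
  have hPCor : P (Cor (P v)) = 0 := hCor (P v)
  simp only [LinearMap.mem_ker, lodApprox, map_sub, hP, hPCor, sub_zero, sub_self]

theorem apply_sub_lodApprox_self {P Cor : M →ₗ[R] M} (a : M →ₗ[R] M →ₗ[R] R)
    (ha_symm : ∀ u v, a u v = a v u)
    (hCor_orth : ∀ w ∈ LinearMap.ker P, ∀ v, a w (v - Cor v) = 0)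
    {v : M} (he_ker : v - lodApprox P Cor v ∈ LinearMap.ker P) :
    a (v - lodApprox P Cor v) (v - lodApprox P Cor v) = a v (v - lodApprox P Cor v) := by
  set e := v - lodApprox P Cor v
  have horth : a e (lodApprox P Cor v) = 0 := hCor_orth e he_ker (P v)
  calc a e e = a e v - a e (lodApprox P Cor v) := map_sub (a e) v _
    _ = a v e := by rw [horth, sub_zero, ha_symm]

end LOD

theorem norm_apply_le_of_mem_ker {V L : Type*} [NormedAddCommGroup V] [Module ℝ V]
    [NormedAddCommGroup L] [Module ℝ L] {P : V →ₗ[ℝ] V} {ι : V →ₗ[ℝ] L} {C : ℝ}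
    (hP_approx : ∀ v, ‖ι (v - P v)‖ ≤ C * ‖v‖) {w : V} (hw : w ∈ LinearMap.ker P) :
    ‖ι w‖ ≤ C * ‖w‖ := by
  simpa [LinearMap.mem_ker.mp hw] using hP_approx w

theorem lod_energy_error_estimate_general
    {V : Type*} [NormedAddCommGroup V] [InnerProductSpace ℝ V]
    {L : Type*} [NormedAddCommGroup L] [InnerProductSpace ℝ L]
    (a : V →ₗ[ℝ] V →ₗ[ℝ] ℝ) (α : ℝ) (hα : 0 < α)
    (ha_symm : ∀ u v : V, a u v = a v u)
    (ha_coer : ∀ v : V, α * ‖v‖ ^ 2 ≤ a v v)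
    (IH : V →L[ℝ] V)
    (hIH_proj : ∀ v : V, IH (IH v) = IH v)
    (Cor : V →ₗ[ℝ] V)
    (hCor_W : ∀ v : V, Cor v ∈ LinearMap.ker (IH : V →ₗ[ℝ] V))
    (hCor_orth : ∀ w ∈ LinearMap.ker (IH : V →ₗ[ℝ] V), ∀ v : V, a w (v - Cor v) = 0)
    (ι : V →L[ℝ] L)
    (H CI : ℝ) (hH : 0 < H) (hCI : 0 < CI)
    (hIH_approx : ∀ v : V, ‖ι (v - IH v)‖ ≤ CI * H * ‖v‖)
    (f : L) (u : V) (hu : ∀ v : V, a u v = ⟪f, ι v⟫) :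
    ‖u - (IH u - Cor (IH u))‖ ≤ CI * H / α * ‖f‖ := by
  set e := u - lodApprox (IH : V →ₗ[ℝ] V) Cor u
  have he_ker : e ∈ LinearMap.ker (IH : V →ₗ[ℝ] V) := sub_lodApprox_mem_ker hIH_proj hCor_W u
  have henergy : a e e ≤ ‖f‖ * (CI * H) * ‖e‖ :=
    calc a e e = a u e := apply_sub_lodApprox_self a ha_symm hCor_orth he_ker
      _ = ⟪f, ι e⟫ := hu e
      _ ≤ ‖f‖ * ‖ι e‖ := real_inner_le_norm f (ι e)
      _ ≤ ‖f‖ * (CI * H * ‖e‖) := by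
        gcongr
        exact norm_apply_le_of_mem_ker (ι := (ι : V →ₗ[ℝ] L)) hIH_approx he_ker
      _ = ‖f‖ * (CI * H) * ‖e‖ := by ring
  calc ‖e‖ ≤ ‖f‖ * (CI * H) / α := norm_le_div_of_coercive a hα (by positivity) ha_coer henergy
    _ = CI * H / α * ‖f‖ := by ring

/-- In the abstract LOD setting with the approximation property of
`I_H`, if `u` solves `a(u,v) = ⟨f, ιv⟩_L` for all `v ∈ V`, then the ideal LOD
approximation satisfies `‖u − (1 − 𝒞)I_H u‖_V ≤ (C_I H / α) ‖f‖_L`. -/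
theorem lod_energy_error_estimate
    {V : Type*} [NormedAddCommGroup V] [InnerProductSpace ℝ V] [CompleteSpace V]
    {L : Type*} [NormedAddCommGroup L] [InnerProductSpace ℝ L] [CompleteSpace L]
    (a : V →ₗ[ℝ] V →ₗ[ℝ] ℝ) (α β : ℝ) (hα : 0 < α) (hβ : 0 < β)
    (ha_symm : ∀ u v : V, a u v = a v u)
    (ha_bdd : ∀ u v : V, |a u v| ≤ β * ‖u‖ * ‖v‖)
    (ha_coer : ∀ v : V, α * ‖v‖ ^ 2 ≤ a v v)
    (VH : Submodule ℝ V) (hVHfin : FiniteDimensional ℝ VH)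
    (IH : V →L[ℝ] V)
    (hIH_range : LinearMap.range (IH : V →ₗ[ℝ] V) = VH)
    (hIH_proj : ∀ v : V, IH (IH v) = IH v)
    (Cor : V →ₗ[ℝ] V)
    (hCor_W : ∀ v : V, Cor v ∈ LinearMap.ker (IH : V →ₗ[ℝ] V))
    (hCor_orth : ∀ w ∈ LinearMap.ker (IH : V →ₗ[ℝ] V), ∀ v : V, a w (v - Cor v) = 0)
    (ι : V →L[ℝ] L) (hι_inj : Function.Injective ι)
    (H CI : ℝ) (hH : 0 < H) (hCI : 0 < CI)
    (hIH_approx : ∀ v : V, ‖ι (v - IH v)‖ ≤ CI * H * ‖v‖)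
    (f : L) (u : V) (hu : ∀ v : V, a u v = ⟪f, ι v⟫) :
    ‖u - (IH u - Cor (IH u))‖ ≤ CI * H / α * ‖f‖ :=
  lod_energy_error_estimate_general a α hα ha_symm ha_coer IH hIH_proj Cor hCor_W hCor_orth ι H CI
    hH hCI hIH_approx f u hu
end

section
/- In the abstract LOD setting, assume additionally that I_H is stable in the V-norm, i.e., ‖I_H v‖_V ≤ C_S ‖v‖_V for all v ∈ V with a constant C_S > 0. Then the Petrov–Galerkin bilinear form b(v_H, z_H) := a(v_H, (1 − 𝒞)z_H) is coercive on V_H: for every v_H ∈ V_H one has a(v_H, (1 − 𝒞)v_H) ≥ (α / C_S²) ‖v_H‖_V². -/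
/-!
Write `e := v_H - 𝒞 v_H`. Since `𝒞 v_H ∈ W`, the orthogonality of the corrector gives
`a(v_H, e) = a(e, e) ≥ α ‖e‖²`, and since `I_H` fixes `v_H` and kills `𝒞 v_H`, stability gives
`‖v_H‖ = ‖I_H e‖ ≤ C_S ‖e‖`.
-/

lemma div_sq_mul_sq_le_mul_sq {α C x y : ℝ} (hα : 0 ≤ α) (hx : 0 ≤ x) (hxy : x ≤ C * y) :
    α / C ^ 2 * x ^ 2 ≤ α * y ^ 2 := by
  have hsq : x ^ 2 ≤ C ^ 2 * y ^ 2 := by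
    rw [← mul_pow]
    exact pow_le_pow_left₀ hx hxy 2
  rcases eq_or_ne C 0 with rfl | hC
  · simp only [ne_eq, OfNat.ofNat_ne_zero, not_false_eq_true, zero_pow, div_zero, zero_mul]
    positivity
  · calc α / C ^ 2 * x ^ 2 ≤ α / C ^ 2 * (C ^ 2 * y ^ 2) := by gcongr
      _ = α * y ^ 2 := by field_simp

lemma norm_le_mul_norm_sub_of_mem_ker {E : Type*} [SeminormedAddCommGroup E] [Module ℝ E]
    {P : E →ₗ[ℝ] E} {C : ℝ} (hP : ∀ v, ‖P v‖ ≤ C * ‖v‖) {v w : E} (hv : P v = v)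
    (hw : w ∈ LinearMap.ker P) : ‖v‖ ≤ C * ‖v - w‖ := by
  have hPvw : P (v - w) = v := by
    rw [map_sub, hv, LinearMap.mem_ker.mp hw, sub_zero]
  simpa only [hPvw] using hP (v - w)

lemma apply_sub_corrector_eq {V : Type*} [AddCommGroup V] [Module ℝ V]
    {a : V →ₗ[ℝ] V →ₗ[ℝ] ℝ} {W : Submodule ℝ V} {Cor : V →ₗ[ℝ] V}
    (hCor_W : ∀ v, Cor v ∈ W) (hCor_orth : ∀ w ∈ W, ∀ v, a w (v - Cor v) = 0) (v : V) :
    a v (v - Cor v) = a (v - Cor v) (v - Cor v) := by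
  rw [map_sub a v (Cor v), LinearMap.sub_apply, hCor_orth _ (hCor_W v) v, sub_zero]

theorem lod_petrov_galerkin_coercive_general
    {V : Type*} [NormedAddCommGroup V] [InnerProductSpace ℝ V]
    (a : V →ₗ[ℝ] V →ₗ[ℝ] ℝ) (α : ℝ) (hα : 0 < α)
    (ha_coer : ∀ v : V, α * ‖v‖ ^ 2 ≤ a v v)
    (VH : Submodule ℝ V)
    (IH : V →L[ℝ] V)
    (hIH_range : LinearMap.range (IH : V →ₗ[ℝ] V) = VH)
    (hIH_proj : ∀ v : V, IH (IH v) = IH v)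
    (Cor : V →ₗ[ℝ] V)
    (hCor_W : ∀ v : V, Cor v ∈ LinearMap.ker (IH : V →ₗ[ℝ] V))
    (hCor_orth : ∀ w ∈ LinearMap.ker (IH : V →ₗ[ℝ] V), ∀ v : V, a w (v - Cor v) = 0)
    (CS : ℝ)
    (hIH_stab : ∀ v : V, ‖IH v‖ ≤ CS * ‖v‖) :
    ∀ vH ∈ VH, α / CS ^ 2 * ‖vH‖ ^ 2 ≤ a vH (vH - Cor vH) := by
  intro vH hvH
  have hfix : IH vH = vH := by
    obtain ⟨u, rfl⟩ : vH ∈ LinearMap.range (IH : V →ₗ[ℝ] V) := hIH_range ▸ hvH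
    exact hIH_proj u
  calc α / CS ^ 2 * ‖vH‖ ^ 2 ≤ α * ‖vH - Cor vH‖ ^ 2 :=
        div_sq_mul_sq_le_mul_sq hα.le (norm_nonneg _)
          (norm_le_mul_norm_sub_of_mem_ker hIH_stab hfix (hCor_W vH))
    _ ≤ a (vH - Cor vH) (vH - Cor vH) := ha_coer _
    _ = a vH (vH - Cor vH) := (apply_sub_corrector_eq hCor_W hCor_orth vH).symm

/-- In the abstract LOD setting, if additionally `I_H` is `V`-stable
with constant `C_S`, then the Petrov–Galerkin form `b(v_H, z_H) = a(v_H, (1−𝒞)z_H)`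
is coercive on `V_H`: `a(v_H, (1−𝒞)v_H) ≥ (α / C_S²) ‖v_H‖²` for all `v_H ∈ V_H`. -/
theorem lod_petrov_galerkin_coercive
    {V : Type*} [NormedAddCommGroup V] [InnerProductSpace ℝ V] [CompleteSpace V]
    (a : V →ₗ[ℝ] V →ₗ[ℝ] ℝ) (α β : ℝ) (hα : 0 < α) (hβ : 0 < β)
    (ha_symm : ∀ u v : V, a u v = a v u)
    (ha_bdd : ∀ u v : V, |a u v| ≤ β * ‖u‖ * ‖v‖)
    (ha_coer : ∀ v : V, α * ‖v‖ ^ 2 ≤ a v v)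
    (VH : Submodule ℝ V) (hVHfin : FiniteDimensional ℝ VH)
    (IH : V →L[ℝ] V)
    (hIH_range : LinearMap.range (IH : V →ₗ[ℝ] V) = VH)
    (hIH_proj : ∀ v : V, IH (IH v) = IH v)
    (Cor : V →ₗ[ℝ] V)
    (hCor_W : ∀ v : V, Cor v ∈ LinearMap.ker (IH : V →ₗ[ℝ] V))
    (hCor_orth : ∀ w ∈ LinearMap.ker (IH : V →ₗ[ℝ] V), ∀ v : V, a w (v - Cor v) = 0)
    (CS : ℝ) (hCS : 0 < CS)
    (hIH_stab : ∀ v : V, ‖IH v‖ ≤ CS * ‖v‖) :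
    ∀ vH ∈ VH, α / CS ^ 2 * ‖vH‖ ^ 2 ≤ a vH (vH - Cor vH) :=
  lod_petrov_galerkin_coercive_general a α hα ha_coer VH IH hIH_range hIH_proj Cor hCor_W hCor_orth
    CS hIH_stab
end

section
/- In the abstract LOD setting with the approximation property of I_H, the worst-case best-approximation error is at most of order H: wcba ≤ (C_I ‖ι‖ / α) H, where ‖ι‖ denotes the operator norm of ι. -/
open scoped RealInnerProductSpace

/-!
Choose `v_H = I_H u(g)`. The approximation property bounds the error by `C_I H ‖u(g)‖`, and
testing the variational equation with `u(g)` itself gives, by coercivity,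
`α ‖u(g)‖² ≤ ⟪g, ι u(g)⟫ ≤ ‖g‖ ‖ι‖ ‖u(g)‖`, i.e. `‖u(g)‖ ≤ ‖ι‖ ‖g‖ / α`.
-/

theorem norm_le_opNorm_mul_norm_div_of_mul_sq_le_inner
    {V L : Type*} [NormedAddCommGroup V] [NormedSpace ℝ V]
    [NormedAddCommGroup L] [InnerProductSpace ℝ L]
    {α : ℝ} (hα : 0 < α) (ι : V →L[ℝ] L) {g : L} {u : V}
    (h : α * ‖u‖ ^ 2 ≤ ⟪g, ι u⟫) : ‖u‖ ≤ ‖ι‖ * ‖g‖ / α := by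
  have hinner : ⟪g, ι u⟫ ≤ ‖ι‖ * ‖g‖ * ‖u‖ :=
    calc ⟪g, ι u⟫ ≤ ‖g‖ * ‖ι u‖ := real_inner_le_norm g (ι u)
      _ ≤ ‖g‖ * (‖ι‖ * ‖u‖) := by gcongr; exact ι.le_opNorm u
      _ = ‖ι‖ * ‖g‖ * ‖u‖ := by ring
  rw [le_div_iff₀ hα]
  rcases (norm_nonneg u).eq_or_lt with hu | hu
  · rw [← hu, zero_mul]; positivity
  · nlinarith

theorem lod_wcba_first_order_general
    {V : Type*} [NormedAddCommGroup V] [InnerProductSpace ℝ V]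
    {L : Type*} [NormedAddCommGroup L] [InnerProductSpace ℝ L]
    (a : V →ₗ[ℝ] V →ₗ[ℝ] ℝ) (α : ℝ) (hα : 0 < α)
    (ha_coer : ∀ v : V, α * ‖v‖ ^ 2 ≤ a v v)
    (VH : Submodule ℝ V)
    (IH : V →L[ℝ] V)
    (hIH_range : LinearMap.range (IH : V →ₗ[ℝ] V) = VH)
    (ι : V →L[ℝ] L)
    (H CI : ℝ) (hH : 0 < H) (hCI : 0 < CI)
    (hIH_approx : ∀ v : V, ‖ι (v - IH v)‖ ≤ CI * H * ‖v‖)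
    (usol : L → V) (husol : ∀ (g : L) (v : V), a (usol g) v = ⟪g, ι v⟫)
    (wcba : ℝ)
    (hwcba : wcba = ⨆ g : {g : L // g ≠ 0}, ⨅ vH : VH, ‖ι (usol g.1) - ι vH‖ / ‖g.1‖) :
    wcba ≤ CI * ‖ι‖ / α * H := by
  subst hwcba
  refine Real.iSup_le (fun ⟨g, hg⟩ => ?_) (by positivity)
  set u := usol g
  have hu : ‖u‖ ≤ ‖ι‖ * ‖g‖ / α :=
    norm_le_opNorm_mul_norm_div_of_mul_sq_le_inner hα ι ((ha_coer u).trans_eq (husol g u))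
  have hIHu : IH u ∈ VH := hIH_range ▸ LinearMap.mem_range_self _ u
  have hbdd : BddBelow (Set.range fun vH : VH => ‖ι u - ι vH‖ / ‖g‖) :=
    ⟨0, by rintro _ ⟨vH, rfl⟩; positivity⟩
  refine ciInf_le_of_le hbdd ⟨IH u, hIHu⟩ ?_
  rw [div_le_iff₀ (norm_pos_iff.mpr hg), ← map_sub]
  calc ‖ι (u - IH u)‖ ≤ CI * H * ‖u‖ := hIH_approx u
    _ ≤ CI * H * (‖ι‖ * ‖g‖ / α) := by gcongr
    _ = CI * ‖ι‖ / α * H * ‖g‖ := by ring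

/-- In the abstract LOD setting with the approximation property of
`I_H`, the worst-case best-approximation error satisfies `wcba ≤ (C_I ‖ι‖ / α) H`. -/
theorem lod_wcba_first_order
    {V : Type*} [NormedAddCommGroup V] [InnerProductSpace ℝ V] [CompleteSpace V]
    {L : Type*} [NormedAddCommGroup L] [InnerProductSpace ℝ L] [CompleteSpace L]
    (a : V →ₗ[ℝ] V →ₗ[ℝ] ℝ) (α β : ℝ) (hα : 0 < α) (hβ : 0 < β)
    (ha_symm : ∀ u v : V, a u v = a v u)
    (ha_bdd : ∀ u v : V, |a u v| ≤ β * ‖u‖ * ‖v‖)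
    (ha_coer : ∀ v : V, α * ‖v‖ ^ 2 ≤ a v v)
    (VH : Submodule ℝ V) (hVHfin : FiniteDimensional ℝ VH)
    (IH : V →L[ℝ] V)
    (hIH_range : LinearMap.range (IH : V →ₗ[ℝ] V) = VH)
    (hIH_proj : ∀ v : V, IH (IH v) = IH v)
    (Cor : V →ₗ[ℝ] V)
    (hCor_W : ∀ v : V, Cor v ∈ LinearMap.ker (IH : V →ₗ[ℝ] V))
    (hCor_orth : ∀ w ∈ LinearMap.ker (IH : V →ₗ[ℝ] V), ∀ v : V, a w (v - Cor v) = 0)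
    (ι : V →L[ℝ] L) (hι_inj : Function.Injective ι)
    (H CI : ℝ) (hH : 0 < H) (hCI : 0 < CI)
    (hIH_approx : ∀ v : V, ‖ι (v - IH v)‖ ≤ CI * H * ‖v‖)
    (usol : L → V) (husol : ∀ (g : L) (v : V), a (usol g) v = ⟪g, ι v⟫)
    (wcba : ℝ)
    (hwcba : wcba = ⨆ g : {g : L // g ≠ 0}, ⨅ vH : VH, ‖ι (usol g.1) - ι vH‖ / ‖g.1‖) :
    wcba ≤ CI * ‖ι‖ / α * H :=
  lod_wcba_first_order_general a α hα ha_coer VH IH hIH_range ι H CI hH hCI hIH_approx usol husol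
    wcba hwcba
end

section
/- Let Ω ⊆ ℝ^d be a Lebesgue-measurable set, let ρ > 0 and s > 0, let G, G₀ : Ω → ℝ^m be measurable with G − G₀ square-integrable. Then ( ∫_Ω ∫_{B(x,ρ) ∩ Ω} |G(y) − G(x)|² dy dx )^{1/2} ≤ 2 (ω_d ρ^d)^{1/2} ‖G − G₀‖_{L²(Ω)} + ρ^{(d+2s)/2} [G₀]_s, where [G₀]_s := ( ∫_Ω ∫_Ω |G₀(x) − G₀(y)|² / |x − y|^{d+2s} dy dx )^{1/2}. -/
/-!
Write `G y - G x = (G - G₀) y - (G₀ x - G₀ y) - (G - G₀) x` and apply Minkowski's inequality in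
`L²` of the pairs `(x, y) ∈ Ω²` with `|y - x| < ρ`. Each outer term depends on one variable
only, and every ball has volume `ω_d ρ^d`, so it contributes `(ω_d ρ^d)^{1/2} ‖G - G₀‖`. On the
middle term, `|x - y|^{d+2s} ≤ ρ^{d+2s}` bounds it by `ρ^{(d+2s)/2} [G₀]_s`.
-/

open MeasureTheory Metric
open scoped ENNReal

def nearDiagonal {α : Type*} [PseudoMetricSpace α] (ρ : ℝ) : Set (α × α) :=
  {p | p.2 ∈ ball p.1 ρ}

section PseudoMetric

variable {α : Type*} [PseudoMetricSpace α] {ρ : ℝ}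

theorem preimage_swap_nearDiagonal :
    Prod.swap ⁻¹' nearDiagonal (α := α) ρ = nearDiagonal ρ := by
  ext p
  simp [nearDiagonal, mem_ball, dist_comm]

variable [MeasurableSpace α] [OpensMeasurableSpace α] [SecondCountableTopology α]
  {μ : Measure α} [SFinite μ]

theorem measurableSet_nearDiagonal : MeasurableSet (nearDiagonal (α := α) ρ) :=
  measurableSet_lt (measurable_snd.dist measurable_fst) measurable_const

theorem measurePreserving_swap_restrict_nearDiagonal :
    MeasurePreserving Prod.swap ((μ.prod μ).restrict (nearDiagonal ρ))
      ((μ.prod μ).restrict (nearDiagonal ρ)) := by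
  simpa only [preimage_swap_nearDiagonal] using
    (Measure.measurePreserving_swap (μ := μ) (ν := μ)).restrict_preimage
      measurableSet_nearDiagonal

theorem lintegral_setLIntegral_ball_eq {f : α → α → ℝ≥0∞}
    (hf : AEMeasurable (Function.uncurry f) (μ.prod μ)) :
    ∫⁻ x, ∫⁻ y in ball x ρ, f x y ∂μ ∂μ = ∫⁻ p in nearDiagonal ρ, f p.1 p.2 ∂μ.prod μ := by
  rw [← lintegral_indicator measurableSet_nearDiagonal]
  refine Eq.trans ?_ (lintegral_prod _ (hf.indicator measurableSet_nearDiagonal)).symm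
  refine lintegral_congr fun x => ?_
  rw [← lintegral_indicator measurableSet_ball]
  rfl

theorem setLIntegral_nearDiagonal_comp_fst_le {V : ℝ≥0∞} (hV : ∀ x, μ (ball x ρ) ≤ V)
    {g : α → ℝ≥0∞} (hg : AEMeasurable g μ) :
    ∫⁻ p in nearDiagonal ρ, g p.1 ∂μ.prod μ ≤ V * ∫⁻ x, g x ∂μ := by
  rw [← lintegral_setLIntegral_ball_eq (f := fun x _ => g x) hg.comp_fst]
  calc ∫⁻ x, ∫⁻ _ in ball x ρ, g x ∂μ ∂μ = ∫⁻ x, g x * μ (ball x ρ) ∂μ := by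
        simp_rw [setLIntegral_const]
    _ ≤ ∫⁻ x, g x * V ∂μ := lintegral_mono fun x => mul_le_mul_right (hV x) _
    _ = V * ∫⁻ x, g x ∂μ := by rw [lintegral_mul_const'' _ hg, mul_comm]

variable {E : Type*} [NormedAddCommGroup E] {p : ℝ≥0∞} {V : ℝ≥0∞} {f : α → E}

theorem eLpNorm_comp_fst_restrict_nearDiagonal_le (hp0 : p ≠ 0) (hp : p ≠ ∞)
    (hV : ∀ x, μ (ball x ρ) ≤ V) (hf : AEStronglyMeasurable f μ) :
    eLpNorm (fun q => f q.1) p ((μ.prod μ).restrict (nearDiagonal ρ)) ≤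
      V ^ (1 / p.toReal) * eLpNorm f p μ := by
  have hp' : 0 ≤ 1 / p.toReal := by positivity
  rw [eLpNorm_eq_lintegral_rpow_enorm_toReal hp0 hp,
    eLpNorm_eq_lintegral_rpow_enorm_toReal hp0 hp, ← ENNReal.mul_rpow_of_nonneg _ _ hp']
  exact ENNReal.rpow_le_rpow
    (setLIntegral_nearDiagonal_comp_fst_le hV (hf.enorm.pow_const _)) hp'

theorem eLpNorm_comp_snd_restrict_nearDiagonal_le (hp0 : p ≠ 0) (hp : p ≠ ∞)
    (hV : ∀ x, μ (ball x ρ) ≤ V) (hf : AEStronglyMeasurable f μ) :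
    eLpNorm (fun q => f q.2) p ((μ.prod μ).restrict (nearDiagonal ρ)) ≤
      V ^ (1 / p.toReal) * eLpNorm f p μ := by
  rw [← eLpNorm_comp_measurePreserving hf.comp_snd.restrict
    measurePreserving_swap_restrict_nearDiagonal]
  exact eLpNorm_comp_fst_restrict_nearDiagonal_le hp0 hp hV hf

end PseudoMetric

theorem eLpNorm_two_eq_lintegral_sq {α E : Type*} [MeasurableSpace α] [NormedAddCommGroup E]
    (f : α → E) (μ : Measure α) :
    eLpNorm f 2 μ = (∫⁻ x, ‖f x‖ₑ ^ 2 ∂μ) ^ (1 / 2 : ℝ) := by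
  simp [eLpNorm_eq_lintegral_rpow_enorm_toReal two_ne_zero ENNReal.ofNat_ne_top]

theorem le_ofReal_rpow_mul_div_ofReal_rpow {a : ℝ≥0∞} {δ ρ t : ℝ} (hδ : 0 ≤ δ) (hδρ : δ ≤ ρ)
    (ht : 0 ≤ t) (ha : δ = 0 → a = 0) :
    a ≤ ENNReal.ofReal (ρ ^ t) * (a / ENNReal.ofReal (δ ^ t)) := by
  rcases hδ.eq_or_lt with rfl | hδ
  · simp [ha rfl]
  have hδt : ENNReal.ofReal (δ ^ t) ≠ 0 := by
    rw [ne_eq, ENNReal.ofReal_eq_zero, not_le]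
    positivity
  calc a = a / ENNReal.ofReal (δ ^ t) * ENNReal.ofReal (δ ^ t) :=
        (ENNReal.div_mul_cancel hδt ENNReal.ofReal_ne_top).symm
    _ ≤ ENNReal.ofReal (ρ ^ t) * (a / ENNReal.ofReal (δ ^ t)) := by
        rw [mul_comm]
        gcongr

section Metric

variable {α : Type*} [MetricSpace α] [MeasurableSpace α] [OpensMeasurableSpace α]
  [SecondCountableTopology α] {μ : Measure α} {ρ t : ℝ}

theorem setLIntegral_nearDiagonal_le_ofReal_rpow_mul {g : α → α → ℝ≥0∞} (hg : ∀ x, g x x = 0)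
    (ht : 0 ≤ t) :
    ∫⁻ p in nearDiagonal ρ, g p.1 p.2 ∂μ.prod μ ≤
      ENNReal.ofReal (ρ ^ t) * ∫⁻ x, ∫⁻ y, g x y / ENNReal.ofReal (dist x y ^ t) ∂μ ∂μ := by
  calc ∫⁻ p in nearDiagonal ρ, g p.1 p.2 ∂μ.prod μ
      ≤ ∫⁻ p in nearDiagonal ρ,
          ENNReal.ofReal (ρ ^ t) * (g p.1 p.2 / ENNReal.ofReal (dist p.1 p.2 ^ t)) ∂μ.prod μ := by
        refine setLIntegral_mono' measurableSet_nearDiagonal fun p hp => ?_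
        refine le_ofReal_rpow_mul_div_ofReal_rpow dist_nonneg ?_ ht fun h => ?_
        · rw [dist_comm]; exact (mem_ball.1 hp).le
        · rw [dist_eq_zero.1 h, hg]
    _ ≤ ∫⁻ p, ENNReal.ofReal (ρ ^ t) *
          (g p.1 p.2 / ENNReal.ofReal (dist p.1 p.2 ^ t)) ∂μ.prod μ :=
        setLIntegral_le_lintegral _ _
    _ ≤ ENNReal.ofReal (ρ ^ t) * ∫⁻ x, ∫⁻ y, g x y / ENNReal.ofReal (dist x y ^ t) ∂μ ∂μ := by
        rw [lintegral_const_mul' _ _ ENNReal.ofReal_ne_top]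
        gcongr
        exact lintegral_prod_le _

theorem eLpNorm_fst_sub_snd_restrict_nearDiagonal_le {E : Type*} [NormedAddCommGroup E] {p : ℝ≥0∞}
    (hp0 : p ≠ 0) (hp : p ≠ ∞) (ht : 0 ≤ t) (hρ : 0 ≤ ρ) (f : α → E) :
    eLpNorm (fun q => f q.1 - f q.2) p ((μ.prod μ).restrict (nearDiagonal ρ)) ≤
      ENNReal.ofReal (ρ ^ (t / p.toReal)) *
        (∫⁻ x, ∫⁻ y, ‖f x - f y‖ₑ ^ p.toReal / ENNReal.ofReal (dist x y ^ t) ∂μ ∂μ) ^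
          (1 / p.toReal) := by
  have hp' : 0 < p.toReal := ENNReal.toReal_pos hp0 hp
  rw [eLpNorm_eq_lintegral_rpow_enorm_toReal hp0 hp, div_eq_mul_one_div t,
    Real.rpow_mul hρ, ← ENNReal.ofReal_rpow_of_nonneg (by positivity) (by positivity),
    ← ENNReal.mul_rpow_of_nonneg _ _ (by positivity)]
  exact ENNReal.rpow_le_rpow
    (setLIntegral_nearDiagonal_le_ofReal_rpow_mul (fun x => by simp [hp']) ht) (by positivity)

theorem eLpNorm_snd_sub_fst_restrict_nearDiagonal_le [SFinite μ] {E : Type*}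
    [NormedAddCommGroup E] {p V : ℝ≥0∞} {f g : α → E} (hf : AEStronglyMeasurable f μ)
    (hg : AEStronglyMeasurable g μ) (hp1 : 1 ≤ p) (hp : p ≠ ∞) (hV : ∀ x, μ (ball x ρ) ≤ V)
    (ht : 0 ≤ t) (hρ : 0 ≤ ρ) :
    eLpNorm (fun q => f q.2 - f q.1) p ((μ.prod μ).restrict (nearDiagonal ρ)) ≤
      2 * V ^ (1 / p.toReal) * eLpNorm (fun x => f x - g x) p μ +
        ENNReal.ofReal (ρ ^ (t / p.toReal)) *
          (∫⁻ x, ∫⁻ y, ‖g x - g y‖ₑ ^ p.toReal / ENNReal.ofReal (dist x y ^ t) ∂μ ∂μ) ^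
            (1 / p.toReal) := by
  have hp0 : p ≠ 0 := (zero_lt_one.trans_le hp1).ne'
  have hsplit : (fun q : α × α => f q.2 - f q.1) = (fun q => f q.2 - g q.2) -
      (fun q => g q.1 - g q.2) - (fun q => f q.1 - g q.1) := by
    ext1 q
    simp only [Pi.sub_apply]
    abel
  rw [hsplit]
  calc _ ≤ eLpNorm (fun q => f q.2 - g q.2) p ((μ.prod μ).restrict (nearDiagonal ρ)) +
        eLpNorm (fun q => g q.1 - g q.2) p ((μ.prod μ).restrict (nearDiagonal ρ)) +
        eLpNorm (fun q => f q.1 - g q.1) p ((μ.prod μ).restrict (nearDiagonal ρ)) := by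
        have h₁ : AEStronglyMeasurable (fun q : α × α => f q.2 - g q.2) (μ.prod μ) :=
          (hf.sub hg).comp_snd
        have h₂ : AEStronglyMeasurable (fun q : α × α => g q.1 - g q.2) (μ.prod μ) :=
          hg.comp_fst.sub hg.comp_snd
        have h₃ : AEStronglyMeasurable (fun q : α × α => f q.1 - g q.1) (μ.prod μ) :=
          (hf.sub hg).comp_fst
        exact (eLpNorm_sub_le (h₁.sub h₂).restrict h₃.restrict hp1).trans
          (add_le_add (eLpNorm_sub_le h₁.restrict h₂.restrict hp1) le_rfl)
    _ ≤ V ^ (1 / p.toReal) * eLpNorm (fun x => f x - g x) p μ +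
          ENNReal.ofReal (ρ ^ (t / p.toReal)) *
            (∫⁻ x, ∫⁻ y, ‖g x - g y‖ₑ ^ p.toReal / ENNReal.ofReal (dist x y ^ t) ∂μ ∂μ) ^
              (1 / p.toReal) +
          V ^ (1 / p.toReal) * eLpNorm (fun x => f x - g x) p μ := add_le_add (add_le_add
          (eLpNorm_comp_snd_restrict_nearDiagonal_le (f := fun x => f x - g x) hp0 hp hV
            (hf.sub hg))
          (eLpNorm_fst_sub_snd_restrict_nearDiagonal_le hp0 hp ht hρ g))
          (eLpNorm_comp_fst_restrict_nearDiagonal_le (f := fun x => f x - g x) hp0 hp hV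
            (hf.sub hg))
    _ = _ := by ring

end Metric

theorem ball_double_integral_split_bound_general
    (d m : ℕ) (Ω : Set (EuclideanSpace ℝ (Fin d)))
    (G G₀ : EuclideanSpace ℝ (Fin d) → EuclideanSpace ℝ (Fin m))
    (hG : Measurable G) (hG₀ : Measurable G₀)
    (s ρ : ℝ) (hs : 0 < s) (hρ : 0 < ρ) :
    (∫⁻ x in Ω, ∫⁻ y in Metric.ball x ρ ∩ Ω, (‖G y - G x‖₊ : ℝ≥0∞) ^ 2) ^ (1 / 2 : ℝ) ≤
      2 * (volume (Metric.ball (0 : EuclideanSpace ℝ (Fin d)) 1) *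
            ENNReal.ofReal (ρ ^ d)) ^ (1 / 2 : ℝ) *
          (∫⁻ x in Ω, (‖G x - G₀ x‖₊ : ℝ≥0∞) ^ 2) ^ (1 / 2 : ℝ) +
        ENNReal.ofReal (ρ ^ (((d : ℝ) + 2 * s) / 2)) *
          (∫⁻ x in Ω, ∫⁻ y in Ω,
            (‖G₀ x - G₀ y‖₊ : ℝ≥0∞) ^ 2 /
              ENNReal.ofReal (dist x y ^ ((d : ℝ) + 2 * s))) ^ (1 / 2 : ℝ) := by
  set μ := volume.restrict Ω with hμ
  have hV : ∀ x, μ (ball x ρ) ≤ volume (ball (0 : EuclideanSpace ℝ (Fin d)) 1) *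
      ENNReal.ofReal (ρ ^ d) := fun x =>
    calc μ (ball x ρ) ≤ volume (ball x ρ) := Measure.restrict_apply_le _ _
      _ = _ := by rw [Measure.addHaar_ball_of_pos _ _ hρ, finrank_euclideanSpace_fin, mul_comm]
  have hLHS : ∫⁻ x in Ω, ∫⁻ y in ball x ρ ∩ Ω, (‖G y - G x‖₊ : ℝ≥0∞) ^ 2 =
      ∫⁻ q in nearDiagonal ρ, (‖G q.2 - G q.1‖₊ : ℝ≥0∞) ^ 2 ∂μ.prod μ := by
    simp_rw [← Measure.restrict_restrict measurableSet_ball, ← hμ]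
    exact lintegral_setLIntegral_ball_eq (by fun_prop)
  have key := eLpNorm_snd_sub_fst_restrict_nearDiagonal_le hG.aestronglyMeasurable
    hG₀.aestronglyMeasurable one_le_two ENNReal.ofNat_ne_top hV (t := d + 2 * s) (by positivity)
    hρ.le
  simp only [ENNReal.toReal_ofNat, ENNReal.rpow_ofNat, enorm_eq_nnnorm,
    eLpNorm_two_eq_lintegral_sq] at key
  rwa [hLHS]

/-- For measurable `G, G₀ : Ω → ℝ^m` with `G − G₀` square-integrable,
`ρ > 0` and `s > 0`, one has (in `[0,∞]`)
`(∫_Ω ∫_{B(x,ρ)∩Ω} |G(y)−G(x)|² dy dx)^{1/2}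
  ≤ 2 (ω_d ρ^d)^{1/2} ‖G−G₀‖_{L²(Ω)} + ρ^{(d+2s)/2} [G₀]_s`. -/
theorem ball_double_integral_split_bound
    (d m : ℕ) (Ω : Set (EuclideanSpace ℝ (Fin d))) (hΩ : MeasurableSet Ω)
    (G G₀ : EuclideanSpace ℝ (Fin d) → EuclideanSpace ℝ (Fin m))
    (hG : Measurable G) (hG₀ : Measurable G₀)
    (hGG₀ : MemLp (fun x => G x - G₀ x) 2 (volume.restrict Ω))
    (s ρ : ℝ) (hs : 0 < s) (hρ : 0 < ρ) :
    (∫⁻ x in Ω, ∫⁻ y in Metric.ball x ρ ∩ Ω, (‖G y - G x‖₊ : ℝ≥0∞) ^ 2) ^ (1 / 2 : ℝ) ≤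
      2 * (volume (Metric.ball (0 : EuclideanSpace ℝ (Fin d)) 1) *
            ENNReal.ofReal (ρ ^ d)) ^ (1 / 2 : ℝ) *
          (∫⁻ x in Ω, (‖G x - G₀ x‖₊ : ℝ≥0∞) ^ 2) ^ (1 / 2 : ℝ) +
        ENNReal.ofReal (ρ ^ (((d : ℝ) + 2 * s) / 2)) *
          (∫⁻ x in Ω, ∫⁻ y in Ω,
            (‖G₀ x - G₀ y‖₊ : ℝ≥0∞) ^ 2 /
              ENNReal.ofReal (dist x y ^ ((d : ℝ) + 2 * s))) ^ (1 / 2 : ℝ) :=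
  ball_double_integral_split_bound_general d m Ω G G₀ hG hG₀ s ρ hs hρ
end

section
/- (Abstract version of Proposition 4.2, error estimate for the localized effective model.) In the quasi-local kernel setting, assume there is M > 0 with ( ∫_Ω |𝒜(x,y)|_op² dy )^{1/2} ≤ M for almost every x ∈ Ω. Let X ⊆ L²(Ω; ℝ^d) be a finite-dimensional subspace, define the bilinear forms 𝔞(V, Z) := ∫_Ω ∫_Ω V(y) · (𝒜(x,y) Z(x)) dy dx and ã(V, Z) := ∫_Ω V(x) · (A_H(x) Z(x)) dx on X × X, and assume 𝔞 is coercive on X, i.e., 𝔞(E, E) ≥ c ‖E‖_{L²(Ω)}² for all E ∈ X with some c > 0. If F : X → ℝ is linear and U, Ũ ∈ X satisfy 𝔞(U, G) = F(G) and ã(Ũ, G) = F(G) for all G ∈ X, then c ‖U − Ũ‖_{L²(Ω)} ≤ M ( ∫_Ω ∫_{B(x,ρ) ∩ Ω} |Ũ(y) − Ũ(x)|² dy dx )^{1/2}. -/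
open MeasureTheory
open scoped ENNReal NNReal RealInnerProductSpace

/-!
With `e = U - Ũ`, coercivity and the two Galerkin equations give
`c ‖e‖² ≤ 𝔞(e, e) = 𝔞(U, e) - 𝔞(Ũ, e) = ã(Ũ, e) - 𝔞(Ũ, e) = ∫∫ ⟪Ũ(x) - Ũ(y), 𝒜(x,y) e(x)⟫ dy dx`.
The integrand vanishes for `|x - y| > ρ`, and `|x - y| = ρ` is a null set, so Cauchy–Schwarz on
`Ω × Ω` bounds it by the nonlocal difference energy of `Ũ` on `|x - y| < ρ` times
`(∫∫ |𝒜(x,y)|² |e(x)|²)^{1/2} ≤ M ‖e‖`. Dividing by `‖e‖` gives the estimate. The same row bound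
`∫ |𝒜(x,y)|² dy ≤ M²` makes every integrand above integrable.
-/

theorem mul_sqrt_le_of_mul_le_mul_sqrt {a b t : ℝ} (ht : 0 ≤ t) (hb : 0 ≤ b)
    (h : a * t ≤ b * √t) : a * √t ≤ b := by
  rcases ht.eq_or_lt with rfl | ht
  · simpa using hb
  · have hsqrt : 0 < √t := Real.sqrt_pos.2 ht
    refine le_of_mul_le_mul_right ?_ hsqrt
    rwa [mul_assoc, Real.mul_self_sqrt ht.le]

theorem integral_mul_le_sqrt_mul_sqrt {β : Type*} [MeasurableSpace β] {ν : Measure β}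
    {f g : β → ℝ} (hf : MemLp f 2 ν) (hg : MemLp g 2 ν) (hf0 : 0 ≤ᵐ[ν] f) (hg0 : 0 ≤ᵐ[ν] g) :
    ∫ x, f x * g x ∂ν ≤ √(∫ x, f x ^ 2 ∂ν) * √(∫ x, g x ^ 2 ∂ν) := by
  have h := integral_mul_le_Lp_mul_Lq_of_nonneg Real.HolderConjugate.two_two hf0 hg0
    (by simpa using hf) (by simpa using hg)
  simpa only [Real.rpow_two, Real.sqrt_eq_rpow] using h

theorem integral_norm_sq_eq_toReal_lintegral {β F : Type*} [MeasurableSpace β]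
    [NormedAddCommGroup F] {ν : Measure β} {f : β → F} (hf : AEStronglyMeasurable f ν) :
    ∫ x, ‖f x‖ ^ 2 ∂ν = (∫⁻ x, ‖f x‖ₑ ^ 2 ∂ν).toReal := by
  rw [integral_eq_lintegral_of_nonneg_ae (ae_of_all _ fun _ => sq_nonneg _) (hf.norm.pow 2)]
  simp_rw [ENNReal.ofReal_pow (norm_nonneg _), ofReal_norm]

section KernelForms

variable {α E : Type*} [MeasurableSpace α] [NormedAddCommGroup E] {μ : Measure α}

section RowBound

variable [NormedSpace ℝ E] {K : α → α → E →L[ℝ] E} {M : ℝ}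

variable (μ K M) in
structure HasRowL2Bound : Prop where
  aestronglyMeasurable : AEStronglyMeasurable (fun p : α × α => K p.1 p.2) (μ.prod μ)
  lintegral_enorm_sq_le : ∀ᵐ x ∂μ, ∫⁻ y, ‖K x y‖ₑ ^ 2 ∂μ ≤ ENNReal.ofReal M ^ 2

theorem lintegral_enorm_kernel_mul_sq_le
    (hKM : ∀ᵐ x ∂μ, ∫⁻ y, ‖K x y‖ₑ ^ 2 ∂μ ≤ ENNReal.ofReal M ^ 2) (z : α → E) :
    ∫⁻ p, (‖K p.1 p.2‖ₑ * ‖z p.1‖ₑ) ^ 2 ∂(μ.prod μ) ≤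
      ENNReal.ofReal M ^ 2 * ∫⁻ x, ‖z x‖ₑ ^ 2 ∂μ := by
  calc ∫⁻ p, (‖K p.1 p.2‖ₑ * ‖z p.1‖ₑ) ^ 2 ∂(μ.prod μ)
      ≤ ∫⁻ x, ∫⁻ y, ‖K x y‖ₑ ^ 2 * ‖z x‖ₑ ^ 2 ∂μ ∂μ := by
        simpa only [mul_pow] using lintegral_prod_le _
    _ = ∫⁻ x, (∫⁻ y, ‖K x y‖ₑ ^ 2 ∂μ) * ‖z x‖ₑ ^ 2 ∂μ := by
        refine lintegral_congr fun x => lintegral_mul_const' _ _ ?_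
        simp
    _ ≤ ∫⁻ x, ENNReal.ofReal M ^ 2 * ‖z x‖ₑ ^ 2 ∂μ := by
        refine lintegral_mono_ae ?_
        filter_upwards [hKM] with x hx using mul_le_mul_left hx _
    _ = ENNReal.ofReal M ^ 2 * ∫⁻ x, ‖z x‖ₑ ^ 2 ∂μ :=
        lintegral_const_mul' _ _ (by simp)

theorem HasRowL2Bound.memLp_norm_mul_norm (hK : HasRowL2Bound μ K M) {z : α → E}
    (hz : MemLp z 2 μ) : MemLp (fun p : α × α => ‖K p.1 p.2‖ * ‖z p.1‖) 2 (μ.prod μ) := by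
  have hmeas := hK.aestronglyMeasurable.norm.mul hz.1.comp_fst.norm
  refine (memLp_two_iff_integrable_sq_norm hmeas).2 ⟨hmeas.norm.pow 2, ?_⟩
  have hz2 := (hz.integrable_norm_pow two_ne_zero).hasFiniteIntegral
  simp only [hasFiniteIntegral_iff_enorm, Pi.mul_apply, enorm_pow, enorm_mul, enorm_norm] at hz2 ⊢
  exact (lintegral_enorm_kernel_mul_sq_le hK.lintegral_enorm_sq_le z).trans_lt
    (ENNReal.mul_lt_top (by simp) hz2)

theorem HasRowL2Bound.integral_sq_norm_mul_norm_le (hK : HasRowL2Bound μ K M) (hM : 0 ≤ M)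
    {z : α → E} (hz : MemLp z 2 μ) :
    ∫ p, (‖K p.1 p.2‖ * ‖z p.1‖) ^ 2 ∂(μ.prod μ) ≤ M ^ 2 * ∫ x, ‖z x‖ ^ 2 ∂μ := by
  have hz2 := (hz.integrable_norm_pow two_ne_zero).hasFiniteIntegral
  simp only [hasFiniteIntegral_iff_enorm, enorm_pow, enorm_norm] at hz2
  calc ∫ p, (‖K p.1 p.2‖ * ‖z p.1‖) ^ 2 ∂(μ.prod μ)
      = (∫⁻ p, (‖K p.1 p.2‖ₑ * ‖z p.1‖ₑ) ^ 2 ∂(μ.prod μ)).toReal := by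
        simpa only [norm_mul, norm_norm, enorm_mul, enorm_norm] using
          integral_norm_sq_eq_toReal_lintegral (hK.memLp_norm_mul_norm hz).1
    _ ≤ (ENNReal.ofReal M ^ 2 * ∫⁻ x, ‖z x‖ₑ ^ 2 ∂μ).toReal :=
        ENNReal.toReal_mono (ENNReal.mul_ne_top (by simp) hz2.ne)
          (lintegral_enorm_kernel_mul_sq_le hK.lintegral_enorm_sq_le z)
    _ = M ^ 2 * ∫ x, ‖z x‖ ^ 2 ∂μ := by
        rw [ENNReal.toReal_mul, ENNReal.toReal_pow, ENNReal.toReal_ofReal hM,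
          integral_norm_sq_eq_toReal_lintegral hz.1]

theorem HasRowL2Bound.ae_integrable [IsFiniteMeasure μ] (hK : HasRowL2Bound μ K M) :
    ∀ᵐ x ∂μ, Integrable (K x) μ := by
  filter_upwards [hK.aestronglyMeasurable.prodMk_left, hK.lintegral_enorm_sq_le] with x hmeas hx
  refine ((memLp_two_iff_integrable_sq_norm hmeas).2 ⟨hmeas.norm.pow 2, ?_⟩).integrable one_le_two
  simp only [hasFiniteIntegral_iff_enorm, enorm_pow, enorm_norm]
  exact hx.trans_lt (by simp)

end RowBound

variable [InnerProductSpace ℝ E] {K : α → α → E →L[ℝ] E} {M : ℝ}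

theorem HasRowL2Bound.integrable_inner_apply (hK : HasRowL2Bound μ K M) {f : α × α → E}
    {z : α → E} (hf : MemLp f 2 (μ.prod μ)) (hz : MemLp z 2 μ) :
    Integrable (fun p => ⟪f p, K p.1 p.2 (z p.1)⟫) (μ.prod μ) := by
  refine (hf.norm.integrable_mul (hK.memLp_norm_mul_norm hz)).mono'
    (hf.1.inner ?_) (ae_of_all _ fun p => ?_)
  · exact isBoundedBilinearMap_apply.continuous.comp_aestronglyMeasurable
      (hK.aestronglyMeasurable.prodMk hz.1.comp_fst)
  · calc ‖⟪f p, K p.1 p.2 (z p.1)⟫‖ ≤ ‖f p‖ * ‖K p.1 p.2 (z p.1)‖ := norm_inner_le_norm _ _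
      _ ≤ ‖f p‖ * (‖K p.1 p.2‖ * ‖z p.1‖) := by gcongr; exact (K _ _).le_opNorm _

variable [IsFiniteMeasure μ]

variable (μ K) in
/-- The quasi-local form `𝔞(v, z)`. -/
noncomputable def quasiLocalForm (v z : α → E) : ℝ :=
  ∫ x, ∫ y, ⟪v y, K x y (z x)⟫ ∂μ ∂μ

variable (μ K) in
/-- The localized form `ã(v, z)`, with coefficient `A_H(x) = ∫ y, K x y`. -/
noncomputable def localizedForm (v z : α → E) : ℝ :=
  ∫ x, ⟪v x, (∫ y, K x y ∂μ) (z x)⟫ ∂μ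

variable {u v z : α → E}

theorem HasRowL2Bound.quasiLocalForm_eq_integral_prod (hK : HasRowL2Bound μ K M)
    (hv : MemLp v 2 μ) (hz : MemLp z 2 μ) :
    quasiLocalForm μ K v z = ∫ p, ⟪v p.2, K p.1 p.2 (z p.1)⟫ ∂(μ.prod μ) :=
  (integral_prod _ (hK.integrable_inner_apply (hv.comp_snd μ) hz)).symm

theorem HasRowL2Bound.localizedForm_eq_integral_prod [CompleteSpace E] (hK : HasRowL2Bound μ K M)
    (hv : MemLp v 2 μ) (hz : MemLp z 2 μ) :
    localizedForm μ K v z = ∫ p, ⟪v p.1, K p.1 p.2 (z p.1)⟫ ∂(μ.prod μ) := by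
  rw [integral_prod _ (hK.integrable_inner_apply (hv.comp_fst μ) hz)]
  refine integral_congr_ae ?_
  filter_upwards [hK.ae_integrable] with x hx
  rw [ContinuousLinearMap.integral_apply hx, ← integral_inner (hx.apply_continuousLinearMap (z x))]

theorem HasRowL2Bound.quasiLocalForm_sub_left (hK : HasRowL2Bound μ K M) (hu : MemLp u 2 μ)
    (hv : MemLp v 2 μ) (hz : MemLp z 2 μ) :
    quasiLocalForm μ K (u - v) z = quasiLocalForm μ K u z - quasiLocalForm μ K v z := by
  rw [hK.quasiLocalForm_eq_integral_prod (hu.sub hv) hz, hK.quasiLocalForm_eq_integral_prod hu hz,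
    hK.quasiLocalForm_eq_integral_prod hv hz,
    ← integral_sub (hK.integrable_inner_apply (hu.comp_snd μ) hz)
      (hK.integrable_inner_apply (hv.comp_snd μ) hz)]
  simp only [Pi.sub_apply, inner_sub_left]

theorem HasRowL2Bound.localizedForm_sub_quasiLocalForm [CompleteSpace E] (hK : HasRowL2Bound μ K M)
    (hv : MemLp v 2 μ) (hz : MemLp z 2 μ) :
    localizedForm μ K v z - quasiLocalForm μ K v z =
      ∫ p, ⟪v p.1 - v p.2, K p.1 p.2 (z p.1)⟫ ∂(μ.prod μ) := by
  rw [hK.localizedForm_eq_integral_prod hv hz, hK.quasiLocalForm_eq_integral_prod hv hz,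
    ← integral_sub (hK.integrable_inner_apply (hv.comp_fst μ) hz)
      (hK.integrable_inner_apply (hv.comp_snd μ) hz)]
  simp only [inner_sub_left]

end KernelForms

section Metric

variable {α E : Type*} [PseudoMetricSpace α] [SecondCountableTopology α] [MeasurableSpace α]
  [OpensMeasurableSpace α] [NormedAddCommGroup E] {μ : Measure α} {ρ : ℝ}

theorem ae_dist_ne_of_measure_sphere_eq_zero [SFinite μ] (h : ∀ x, μ (Metric.sphere x ρ) = 0) :
    ∀ᵐ p ∂(μ.prod μ), dist p.1 p.2 ≠ ρ := by
  have hmeas : MeasurableSet {p : α × α | dist p.1 p.2 = ρ} :=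
    measurableSet_eq_fun measurable_dist measurable_const
  rw [ae_iff]
  simp only [ne_eq, not_not]
  refine (Measure.measure_prod_null hmeas).2 (ae_of_all _ fun x => ?_)
  simpa [Set.preimage, Metric.sphere, dist_comm] using h x

variable [IsFiniteMeasure μ] {v : α → E}

theorem memLp_indicator_dist_lt (hv : MemLp v 2 μ) :
    MemLp ({p : α × α | dist p.1 p.2 < ρ}.indicator fun p => ‖v p.1 - v p.2‖) 2 (μ.prod μ) :=
  ((hv.comp_fst μ).sub (hv.comp_snd μ)).norm.indicator
    (measurableSet_lt (continuous_fst.dist continuous_snd).measurable measurable_const)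

theorem integral_sq_indicator_dist_lt (hv : MemLp v 2 μ) :
    ∫ p, ({p : α × α | dist p.1 p.2 < ρ}.indicator (fun p => ‖v p.1 - v p.2‖) p) ^ 2 ∂(μ.prod μ)
      = ∫ x, ∫ y in Metric.ball x ρ, ‖v y - v x‖ ^ 2 ∂μ ∂μ := by
  rw [integral_prod _ (memLp_indicator_dist_lt hv).integrable_sq]
  refine integral_congr_ae (ae_of_all _ fun x => ?_)
  dsimp only
  rw [← integral_indicator measurableSet_ball]
  congr 1 with y
  by_cases hy : dist y x < ρ <;> simp [Metric.mem_ball, hy, dist_comm x y, norm_sub_rev (v x)]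

theorem HasRowL2Bound.localizedForm_sub_quasiLocalForm_le [InnerProductSpace ℝ E] [CompleteSpace E]
    {K : α → α → E →L[ℝ] E} {M : ℝ} (hK : HasRowL2Bound μ K M) (hM : 0 ≤ M)
    (hK_supp : ∀ x y, ρ < dist x y → K x y = 0) (hsphere : ∀ x, μ (Metric.sphere x ρ) = 0)
    {z : α → E} (hv : MemLp v 2 μ) (hz : MemLp z 2 μ) :
    localizedForm μ K v z - quasiLocalForm μ K v z ≤
      M * √(∫ x, ∫ y in Metric.ball x ρ, ‖v y - v x‖ ^ 2 ∂μ ∂μ) * √(∫ x, ‖z x‖ ^ 2 ∂μ) := by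
  set D := {p : α × α | dist p.1 p.2 < ρ}.indicator fun p => ‖v p.1 - v p.2‖
  set G := fun p : α × α => ‖K p.1 p.2‖ * ‖z p.1‖
  have hD : MemLp D 2 (μ.prod μ) := memLp_indicator_dist_lt hv
  have hG : MemLp G 2 (μ.prod μ) := hK.memLp_norm_mul_norm hz
  have hpointwise : ∀ᵐ p ∂(μ.prod μ), ‖⟪v p.1 - v p.2, K p.1 p.2 (z p.1)⟫‖ ≤ D p * G p := by
    filter_upwards [ae_dist_ne_of_measure_sphere_eq_zero hsphere] with p hp
    rcases hp.lt_or_gt with hlt | hgt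
    · rw [show D p = ‖v p.1 - v p.2‖ from
        Set.indicator_of_mem (s := {p : α × α | dist p.1 p.2 < ρ}) hlt _]
      calc ‖⟪v p.1 - v p.2, K p.1 p.2 (z p.1)⟫‖
          ≤ ‖v p.1 - v p.2‖ * ‖K p.1 p.2 (z p.1)‖ := norm_inner_le_norm _ _
        _ ≤ ‖v p.1 - v p.2‖ * (‖K p.1 p.2‖ * ‖z p.1‖) := by gcongr; exact (K _ _).le_opNorm _
    · have hzero : K p.1 p.2 = 0 := hK_supp _ _ hgt
      simp [G, hzero]
  calc localizedForm μ K v z - quasiLocalForm μ K v z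
      = ∫ p, ⟪v p.1 - v p.2, K p.1 p.2 (z p.1)⟫ ∂(μ.prod μ) :=
        hK.localizedForm_sub_quasiLocalForm hv hz
    _ ≤ ∫ p, D p * G p ∂(μ.prod μ) :=
        (le_abs_self _).trans (norm_integral_le_of_norm_le (hD.integrable_mul hG) hpointwise)
    _ ≤ √(∫ p, D p ^ 2 ∂(μ.prod μ)) * √(∫ p, G p ^ 2 ∂(μ.prod μ)) :=
        integral_mul_le_sqrt_mul_sqrt hD hG
          (ae_of_all _ fun _ => Set.indicator_nonneg (fun _ _ => norm_nonneg _) _)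
          (ae_of_all _ fun _ => by positivity)
    _ ≤ √(∫ x, ∫ y in Metric.ball x ρ, ‖v y - v x‖ ^ 2 ∂μ ∂μ) * √(M ^ 2 * ∫ x, ‖z x‖ ^ 2 ∂μ) := by
        rw [integral_sq_indicator_dist_lt hv]
        gcongr
        exact hK.integral_sq_norm_mul_norm_le hM hz
    _ = M * √(∫ x, ∫ y in Metric.ball x ρ, ‖v y - v x‖ ^ 2 ∂μ ∂μ) * √(∫ x, ‖z x‖ ^ 2 ∂μ) := by
        rw [Real.sqrt_mul (sq_nonneg M), Real.sqrt_sq hM]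
        ring

end Metric

theorem quasi_local_vs_local_error_estimate_general
    (d : ℕ) (Ω : Set (EuclideanSpace ℝ (Fin d)))
    (hΩbdd : Bornology.IsBounded Ω) (ρ : ℝ) (hρ : 0 < ρ)
    (K : EuclideanSpace ℝ (Fin d) → EuclideanSpace ℝ (Fin d) →
      (EuclideanSpace ℝ (Fin d) →L[ℝ] EuclideanSpace ℝ (Fin d)))
    (hK_meas : AEStronglyMeasurable (fun p : EuclideanSpace ℝ (Fin d) × EuclideanSpace ℝ (Fin d) => K p.1 p.2)
      ((volume.restrict Ω).prod (volume.restrict Ω)))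
    (hK_supp : ∀ x y, ρ < dist x y → K x y = 0)
    (M : ℝ) (hM : 0 < M)
    (hK_M : ∀ᵐ x ∂(volume.restrict Ω),
      ∫⁻ y in Ω, (‖K x y‖₊ : ℝ≥0∞) ^ 2 ≤ ENNReal.ofReal M ^ 2)
    (X : Submodule ℝ (EuclideanSpace ℝ (Fin d) → EuclideanSpace ℝ (Fin d)))
    (hXL2 : ∀ G : X, MemLp (G : EuclideanSpace ℝ (Fin d) → EuclideanSpace ℝ (Fin d)) 2
      (volume.restrict Ω))
    (c : ℝ)
    (hcoer : ∀ G : X,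
      c * (∫ x in Ω, ‖(G : EuclideanSpace ℝ (Fin d) → EuclideanSpace ℝ (Fin d)) x‖ ^ 2) ≤
        ∫ x in Ω, ∫ y in Ω,
          ⟪(G : EuclideanSpace ℝ (Fin d) → EuclideanSpace ℝ (Fin d)) y,
            (K x y) ((G : EuclideanSpace ℝ (Fin d) → EuclideanSpace ℝ (Fin d)) x)⟫)
    (F : X →ₗ[ℝ] ℝ) (U Ut : X)
    (hU : ∀ G : X,
      (∫ x in Ω, ∫ y in Ω,
        ⟪(U : EuclideanSpace ℝ (Fin d) → EuclideanSpace ℝ (Fin d)) y,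
          (K x y) ((G : EuclideanSpace ℝ (Fin d) → EuclideanSpace ℝ (Fin d)) x)⟫) = F G)
    (hUt : ∀ G : X,
      (∫ x in Ω,
        ⟪(Ut : EuclideanSpace ℝ (Fin d) → EuclideanSpace ℝ (Fin d)) x,
          (∫ y in Ω, K x y) ((G : EuclideanSpace ℝ (Fin d) → EuclideanSpace ℝ (Fin d)) x)⟫) = F G) :
    c * Real.sqrt (∫ x in Ω,
        ‖(U : EuclideanSpace ℝ (Fin d) → EuclideanSpace ℝ (Fin d)) x -
          (Ut : EuclideanSpace ℝ (Fin d) → EuclideanSpace ℝ (Fin d)) x‖ ^ 2) ≤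
      M * Real.sqrt (∫ x in Ω, ∫ y in Metric.ball x ρ ∩ Ω,
        ‖(Ut : EuclideanSpace ℝ (Fin d) → EuclideanSpace ℝ (Fin d)) y -
          (Ut : EuclideanSpace ℝ (Fin d) → EuclideanSpace ℝ (Fin d)) x‖ ^ 2) := by
  have : IsFiniteMeasure (volume.restrict Ω) :=
    isFiniteMeasure_restrict.2 hΩbdd.measure_lt_top.ne
  have hK : HasRowL2Bound (volume.restrict Ω) K M := ⟨hK_meas, hK_M⟩
  have hsphere (x : EuclideanSpace ℝ (Fin d)) : volume.restrict Ω (Metric.sphere x ρ) = 0 :=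
    nonpos_iff_eq_zero.1 <| (Measure.restrict_apply_le Ω _).trans_eq
      (Measure.addHaar_sphere_of_ne_zero volume x hρ.ne')
  have hE : MemLp (U - Ut : EuclideanSpace ℝ (Fin d) → EuclideanSpace ℝ (Fin d)) 2
      (volume.restrict Ω) := hXL2 (U - Ut)
  have hsolutions : quasiLocalForm (volume.restrict Ω) K U (U - Ut) =
      localizedForm (volume.restrict Ω) K Ut (U - Ut) :=
    (hU (U - Ut)).trans (hUt (U - Ut)).symm
  have hest := hK.localizedForm_sub_quasiLocalForm_le hM.le hK_supp hsphere (hXL2 Ut) hE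
  simp_rw [Measure.restrict_restrict measurableSet_ball] at hest
  refine mul_sqrt_le_of_mul_le_mul_sqrt (integral_nonneg fun _ => sq_nonneg _) (by positivity) ?_
  calc _ ≤ quasiLocalForm (volume.restrict Ω) K (U - Ut) (U - Ut) := hcoer (U - Ut)
    _ = localizedForm (volume.restrict Ω) K Ut (U - Ut) -
          quasiLocalForm (volume.restrict Ω) K Ut (U - Ut) := by
        rw [hK.quasiLocalForm_sub_left (hXL2 U) (hXL2 Ut) hE, hsolutions]
    _ ≤ _ := hest

/-- abstract version of Proposition 4.2. In the quasi-local kernel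
setting, let `X` be a finite-dimensional subspace of `L²(Ω;ℝ^d)`, assume the
quasi-local form `𝔞(V,Z) = ∫_Ω∫_Ω V(y)·(𝒜(x,y)Z(x)) dy dx` is coercive on `X` with
constant `c > 0`, and let `U, Ũ ∈ X` solve `𝔞(U,·) = F` and `ã(Ũ,·) = F` respectively,
where `ã(V,Z) = ∫_Ω V(x)·(A_H(x)Z(x)) dx` with `A_H(x) = ∫_Ω 𝒜(x,y) dy`. Then
`c ‖U − Ũ‖_{L²(Ω)} ≤ M (∫_Ω∫_{B(x,ρ)∩Ω} |Ũ(y)−Ũ(x)|² dy dx)^{1/2}`. -/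
theorem quasi_local_vs_local_error_estimate
    (d : ℕ) (Ω : Set (EuclideanSpace ℝ (Fin d))) (hΩ : MeasurableSet Ω)
    (hΩbdd : Bornology.IsBounded Ω) (ρ : ℝ) (hρ : 0 < ρ)
    (K : EuclideanSpace ℝ (Fin d) → EuclideanSpace ℝ (Fin d) →
      (EuclideanSpace ℝ (Fin d) →L[ℝ] EuclideanSpace ℝ (Fin d)))
    (hK_meas : AEStronglyMeasurable (fun p : EuclideanSpace ℝ (Fin d) × EuclideanSpace ℝ (Fin d) => K p.1 p.2)
      ((volume.restrict Ω).prod (volume.restrict Ω)))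
    (Cb : ℝ)
    (hK_bdd : ∀ᵐ p ∂((volume.restrict Ω).prod (volume.restrict Ω)), ‖K p.1 p.2‖ ≤ Cb)
    (hK_supp : ∀ x y, ρ < dist x y → K x y = 0)
    (M : ℝ) (hM : 0 < M)
    (hK_M : ∀ᵐ x ∂(volume.restrict Ω),
      ∫⁻ y in Ω, (‖K x y‖₊ : ℝ≥0∞) ^ 2 ≤ ENNReal.ofReal M ^ 2)
    (X : Submodule ℝ (EuclideanSpace ℝ (Fin d) → EuclideanSpace ℝ (Fin d)))
    (hXfin : FiniteDimensional ℝ X)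
    (hXL2 : ∀ G : X, MemLp (G : EuclideanSpace ℝ (Fin d) → EuclideanSpace ℝ (Fin d)) 2
      (volume.restrict Ω))
    (c : ℝ) (hc : 0 < c)
    (hcoer : ∀ G : X,
      c * (∫ x in Ω, ‖(G : EuclideanSpace ℝ (Fin d) → EuclideanSpace ℝ (Fin d)) x‖ ^ 2) ≤
        ∫ x in Ω, ∫ y in Ω,
          ⟪(G : EuclideanSpace ℝ (Fin d) → EuclideanSpace ℝ (Fin d)) y,
            (K x y) ((G : EuclideanSpace ℝ (Fin d) → EuclideanSpace ℝ (Fin d)) x)⟫)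
    (F : X →ₗ[ℝ] ℝ) (U Ut : X)
    (hU : ∀ G : X,
      (∫ x in Ω, ∫ y in Ω,
        ⟪(U : EuclideanSpace ℝ (Fin d) → EuclideanSpace ℝ (Fin d)) y,
          (K x y) ((G : EuclideanSpace ℝ (Fin d) → EuclideanSpace ℝ (Fin d)) x)⟫) = F G)
    (hUt : ∀ G : X,
      (∫ x in Ω,
        ⟪(Ut : EuclideanSpace ℝ (Fin d) → EuclideanSpace ℝ (Fin d)) x,
          (∫ y in Ω, K x y) ((G : EuclideanSpace ℝ (Fin d) → EuclideanSpace ℝ (Fin d)) x)⟫) = F G) :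
    c * Real.sqrt (∫ x in Ω,
        ‖(U : EuclideanSpace ℝ (Fin d) → EuclideanSpace ℝ (Fin d)) x -
          (Ut : EuclideanSpace ℝ (Fin d) → EuclideanSpace ℝ (Fin d)) x‖ ^ 2) ≤
      M * Real.sqrt (∫ x in Ω, ∫ y in Metric.ball x ρ ∩ Ω,
        ‖(Ut : EuclideanSpace ℝ (Fin d) → EuclideanSpace ℝ (Fin d)) y -
          (Ut : EuclideanSpace ℝ (Fin d) → EuclideanSpace ℝ (Fin d)) x‖ ^ 2) :=
  quasi_local_vs_local_error_estimate_general d Ω hΩbdd ρ hρ K hK_meas hK_supp M hM hK_M X hXL2 c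
    hcoer F U Ut hU hUt
end
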